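/- arXiv:math/0502221 — 2 statements merged into one kernel-verified Lean document; each statement's English description precedes it below -/
import Mathlib

section
/- Let n ≥ 3, let L ≥ 1 be an integer, and for 3 ≤ i ≤ n and 1 ≤ j ≤ L let c_{ij}, d_{ij} ∈ {0, ±1}. Set m_i := Σ_{j=1}^{L} (c_{ij}·F_{2j} + d_{ij}·F_{2j+1}) for 3 ≤ i ≤ n. For 1 ≤ j ≤ L, let a_j ∈ SL_n(ℤ) be the row matrix whose first row is (1, 0, c_{3j}, …, c_{nj}) and let b_j ∈ SL_n(ℤ) be the row matrix whose second row is (0, 1, d_{3j}, …, d_{nj}). Let u := (e_{2,1}·e_{1,2})·a_1·b_1·(e_{2,1}·e_{1,2})·a_2·b_2·⋯·(e_{2,1}·e_{1,2})·a_L·b_L, and let v be the product obtained from u by replacing each a_j and b_j by its inverse. Then in SL_n(ℤ) the product e_{1,2}² · u · (e_{2,1}·e_{1,2})^{−L} · e_{1,2}⁻¹ · v · (e_{2,1}·e_{1,2})^{−L} · e_{1,2}⁻¹ equals the row matrix whose first row is (1, 0, m_3, …, m_n). -/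
/-- The n×n elementary matrix e_{i,j}: 1's on the diagonal, 1 in the (i,j) entry,
and 0's elsewhere. -/
def Eij (n : ℕ) (i j : Fin n) : Matrix (Fin n) (Fin n) ℤ :=
  1 + Matrix.single i j 1

/-- The row matrix a_j whose first row is (1, 0, c_{3j}, …, c_{nj}) and whose other
rows agree with the identity. -/
def aMat (n : ℕ) (c : ℕ → ℕ → ℤ) (j : ℕ) : Matrix (Fin n) (Fin n) ℤ :=
  Matrix.of fun i' j' =>
    if i' = j' then 1
    else if (i' : ℕ) = 0 ∧ 2 ≤ (j' : ℕ) then c ((j' : ℕ) + 1) j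
    else 0

/-- The row matrix b_j whose second row is (0, 1, d_{3j}, …, d_{nj}) and whose other
rows agree with the identity. -/
def bMat (n : ℕ) (d : ℕ → ℕ → ℤ) (j : ℕ) : Matrix (Fin n) (Fin n) ℤ :=
  Matrix.of fun i' j' =>
    if i' = j' then 1
    else if (i' : ℕ) = 1 ∧ 2 ≤ (j' : ℕ) then d ((j' : ℕ) + 1) j
    else 0

/-- The row matrix with first row (1, 0, m_3, …, m_n) where
m_i = Σ_{j=1}^{L} (c_{ij} F_{2j} + d_{ij} F_{2j+1}). -/
def Wmat (n L : ℕ) (c d : ℕ → ℕ → ℤ) : Matrix (Fin n) (Fin n) ℤ :=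
  Matrix.of fun i' j' =>
    if i' = j' then 1
    else if (i' : ℕ) = 0 ∧ 2 ≤ (j' : ℕ) then
      ∑ j ∈ Finset.Icc 1 L,
        (c ((j' : ℕ) + 1) j * (Nat.fib (2 * j) : ℤ) +
         d ((j' : ℕ) + 1) j * (Nat.fib (2 * j + 1) : ℤ))
    else 0


namespace FibWordAux

open Matrix

def eEq (n : ℕ) (hn : 2 ≤ n) : Fin n ≃ Fin 2 ⊕ Fin (n - 2) where
  toFun k := if h : (k : ℕ) < 2 then Sum.inl ⟨k, h⟩ else Sum.inr ⟨(k : ℕ) - 2, by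
    have := k.2; omega⟩
  invFun s := match s with
    | Sum.inl i => ⟨(i : ℕ), by have := i.2; omega⟩
    | Sum.inr i => ⟨(i : ℕ) + 2, by have := i.2; omega⟩
  left_inv k := by
    apply Fin.ext
    by_cases h : (k : ℕ) < 2 <;> simp only [h, dif_pos, dif_neg, not_false_iff]
    have := k.2; omega
  right_inv s := by
    rcases s with i | i
    · have h : ((i : ℕ) : ℕ) < 2 := i.2
      simp only [h, dif_pos]
    · simp only [dif_neg (by omega : ¬ ((i : ℕ) + 2 < 2))]
      congr 1

lemma eEq_apply (n : ℕ) (hn : 2 ≤ n) (k : Fin n) :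
    eEq n hn k = if h : (k : ℕ) < 2 then Sum.inl ⟨k, h⟩ else Sum.inr ⟨(k : ℕ) - 2, by
      have := k.2; omega⟩ := rfl

def blk (n : ℕ) (hn : 2 ≤ n) (P : Matrix (Fin 2) (Fin 2) ℤ)
    (v : Matrix (Fin 2) (Fin (n - 2)) ℤ) : Matrix (Fin n) (Fin n) ℤ :=
  (Matrix.fromBlocks P v 0 1).submatrix (eEq n hn) (eEq n hn)

lemma blk_mul (n : ℕ) (hn : 2 ≤ n) (P Q : Matrix (Fin 2) (Fin 2) ℤ)
    (v w : Matrix (Fin 2) (Fin (n - 2)) ℤ) :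
    blk n hn P v * blk n hn Q w = blk n hn (P * Q) (P * w + v) := by
  unfold blk
  rw [Matrix.submatrix_mul_equiv]
  rw [Matrix.fromBlocks_multiply]
  simp

lemma blk_one (n : ℕ) (hn : 2 ≤ n) : blk n hn 1 0 = 1 := by
  unfold blk
  rw [Matrix.fromBlocks_one, Matrix.submatrix_one_equiv]

lemma blk_pow (n : ℕ) (hn : 2 ≤ n) (P : Matrix (Fin 2) (Fin 2) ℤ) (k : ℕ) :
    (blk n hn P 0) ^ k = blk n hn (P ^ k) 0 := by
  induction k with
  | zero => simpa using (blk_one n hn).symm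
  | succ k ih => rw [pow_succ, ih, blk_mul, pow_succ]; simp

lemma blk_apply (n : ℕ) (hn : 2 ≤ n) (P : Matrix (Fin 2) (Fin 2) ℤ)
    (v : Matrix (Fin 2) (Fin (n - 2)) ℤ) (i j : Fin n) :
    blk n hn P v i j =
      if hi : (i : ℕ) < 2 then
        if hj : (j : ℕ) < 2 then P ⟨i, hi⟩ ⟨j, hj⟩
        else v ⟨i, hi⟩ ⟨(j : ℕ) - 2, by have := j.2; omega⟩
      else if (i : ℕ) = (j : ℕ) then 1 else 0 := by
  unfold blk
  simp only [Matrix.submatrix_apply, eEq_apply]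
  split_ifs with hi hj h hj h
  · rfl
  · rfl
  · exact absurd h (by omega)
  · rfl
  · simp only [Matrix.fromBlocks_apply₂₂, Matrix.one_apply]
    rw [if_pos (by simp only [Fin.mk.injEq]; omega)]
  · simp only [Matrix.fromBlocks_apply₂₂, Matrix.one_apply]
    rw [if_neg (by simp only [Fin.mk.injEq]; omega)]

end FibWordAux
namespace FibWordAux

noncomputable section

def Pm : Matrix (Fin 2) (Fin 2) ℤ := !![1, 1; 0, 1]
def Pim : Matrix (Fin 2) (Fin 2) ℤ := !![1, -1; 0, 1]
def Tm : Matrix (Fin 2) (Fin 2) ℤ := !![1, 1; 1, 2]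
def Tim : Matrix (Fin 2) (Fin 2) ℤ := !![2, -1; -1, 1]

lemma hPPi : Pm * Pim = 1 := by
  rw [Pm, Pim, Matrix.mul_fin_two, Matrix.one_fin_two]; norm_num

lemma hTTi : Tm * Tim = 1 := by
  rw [Tm, Tim, Matrix.mul_fin_two, Matrix.one_fin_two]; norm_num

lemma hTiT : Tim * Tm = 1 := by
  rw [Tm, Tim, Matrix.mul_fin_two, Matrix.one_fin_two]; norm_num

lemma hTLTiL (L : ℕ) : Tm ^ L * Tim ^ L = 1 := by
  rw [← Commute.mul_pow (by rw [Commute, SemiconjBy, hTTi, hTiT]), hTTi, one_pow]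

lemma hPsqPi : Pm ^ 2 * Pim = Pm := by
  rw [pow_two, mul_assoc, hPPi, mul_one]

lemma fib_step (k : ℕ) : Nat.fib (k + 2) = Nat.fib k + Nat.fib (k + 1) :=
  Nat.fib_add_two

lemma Tm_pow_fib (j : ℕ) :
    Tm ^ (j + 1) = !![(Nat.fib (2 * j + 1) : ℤ), (Nat.fib (2 * j + 2) : ℤ);
      (Nat.fib (2 * j + 2) : ℤ), (Nat.fib (2 * j + 3) : ℤ)] := by
  induction j with
  | zero => norm_num [Tm]
  | succ j ih =>
    rw [pow_succ, ih, Tm, Matrix.mul_fin_two]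
    have h1 : Nat.fib (2 * j + 3) = Nat.fib (2 * j + 1) + Nat.fib (2 * j + 2) := by
      rw [show 2 * j + 3 = (2 * j + 1) + 2 by ring, fib_step,
        show 2 * j + 1 + 1 = 2 * j + 2 by ring]
    have h2 : Nat.fib (2 * j + 4) = Nat.fib (2 * j + 2) + Nat.fib (2 * j + 3) := by
      rw [show 2 * j + 4 = (2 * j + 2) + 2 by ring, fib_step,
        show 2 * j + 2 + 1 = 2 * j + 3 by ring]
    have h3 : Nat.fib (2 * j + 5) = Nat.fib (2 * j + 3) + Nat.fib (2 * j + 4) := by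
      rw [show 2 * j + 5 = (2 * j + 3) + 2 by ring, fib_step,
        show 2 * j + 3 + 1 = 2 * j + 4 by ring]
    have e1 : 2 * (j + 1) + 1 = 2 * j + 3 := by ring
    have e2 : 2 * (j + 1) + 2 = 2 * j + 4 := by ring
    have e3 : 2 * (j + 1) + 3 = 2 * j + 5 := by ring
    rw [e1, e2, e3]
    ext i j
    fin_cases i <;> fin_cases j <;>
      simp [Matrix.cons_val_zero, Matrix.cons_val_one] <;> omega

end

end FibWordAux
namespace FibWordAux

open Matrix

lemma coe_inv_eq {n : ℕ} {g : Matrix.SpecialLinearGroup (Fin n) ℤ}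
    {M : Matrix (Fin n) (Fin n) ℤ}
    (h : (g : Matrix (Fin n) (Fin n) ℤ) * M = 1) :
    ((g⁻¹ : Matrix.SpecialLinearGroup (Fin n) ℤ) : Matrix (Fin n) (Fin n) ℤ) = M := by
  calc ((g⁻¹ : Matrix.SpecialLinearGroup (Fin n) ℤ) : Matrix (Fin n) (Fin n) ℤ)
      = ↑g⁻¹ * ((g : Matrix (Fin n) (Fin n) ℤ) * M) := by rw [h, mul_one]
    _ = (↑g⁻¹ * (g : Matrix (Fin n) (Fin n) ℤ)) * M := (mul_assoc _ _ _).symm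
    _ = ((g⁻¹ * g : Matrix.SpecialLinearGroup (Fin n) ℤ) : Matrix (Fin n) (Fin n) ℤ) * M := by
        rw [Matrix.SpecialLinearGroup.coe_mul]
    _ = M := by rw [inv_mul_cancel]; simp

lemma prod_blk (n : ℕ) (hn : 2 ≤ n) (g : ℕ → Matrix.SpecialLinearGroup (Fin n) ℤ)
    (u : ℕ → Matrix (Fin 2) (Fin (n - 2)) ℤ) :
    ∀ K : ℕ, (∀ j, 1 ≤ j → j ≤ K →
        ((g j : Matrix (Fin n) (Fin n) ℤ)) = blk n hn Tm (Tm * u j)) →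
      ((((List.range K).map (fun j => g (j + 1))).prod :
          Matrix.SpecialLinearGroup (Fin n) ℤ) : Matrix (Fin n) (Fin n) ℤ)
        = blk n hn (Tm ^ K) (∑ j ∈ Finset.Icc 1 K, Tm ^ j * u j) := by
  intro K
  induction K with
  | zero =>
    intro _
    rw [List.range_zero, List.map_nil, List.prod_nil, pow_zero,
      Finset.Icc_eq_empty (by omega), Finset.sum_empty, blk_one]
    simp
  | succ K ih =>
    intro h
    rw [List.range_succ, List.map_append, List.prod_append, List.map_singleton,
      List.prod_singleton, Matrix.SpecialLinearGroup.coe_mul,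
      ih (fun j h1 h2 => h j h1 (by omega)), h (K + 1) (by omega) (le_refl _), blk_mul]
    rw [Finset.sum_Icc_succ_top (by omega : 1 ≤ K + 1), ← Matrix.mul_assoc, ← pow_succ,
      add_comm (Tm ^ (K + 1) * u (K + 1))]

end FibWordAux

namespace FibWordAux

def Qm : Matrix (Fin 2) (Fin 2) ℤ := !![1, 0; 1, 1]

lemma hQP : Qm * Pm = Tm := by
  rw [Qm, Pm, Tm, Matrix.mul_fin_two]; norm_num

def vAm (n : ℕ) (c : ℕ → ℕ → ℤ) (j : ℕ) : Matrix (Fin 2) (Fin (n - 2)) ℤ :=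
  Matrix.of fun i k => if (i : ℕ) = 0 then c ((k : ℕ) + 3) j else 0

def vBm (n : ℕ) (d : ℕ → ℕ → ℤ) (j : ℕ) : Matrix (Fin 2) (Fin (n - 2)) ℤ :=
  Matrix.of fun i k => if (i : ℕ) = 1 then d ((k : ℕ) + 3) j else 0

def mVm (n L : ℕ) (c d : ℕ → ℕ → ℤ) : Matrix (Fin 2) (Fin (n - 2)) ℤ :=
  Matrix.of fun i k =>
    if (i : ℕ) = 0 then
      ∑ j ∈ Finset.Icc 1 L,
        (c ((k : ℕ) + 3) j * (Nat.fib (2 * j) : ℤ) +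
         d ((k : ℕ) + 3) j * (Nat.fib (2 * j + 1) : ℤ))
    else 0

lemma Eij01_blk (n : ℕ) (hn : 2 ≤ n) (h0 : 0 < n) (h1 : 1 < n) :
    Eij n ⟨0, h0⟩ ⟨1, h1⟩ = blk n hn Pm 0 := by
  ext i j
  rw [blk_apply]
  simp only [Eij, Matrix.add_apply, Matrix.one_apply, Matrix.single, Matrix.of_apply]
  by_cases hi : (i : ℕ) < 2
  · by_cases hj : (j : ℕ) < 2
    · rw [dif_pos hi, dif_pos hj]
      rcases i with ⟨iv, hivn⟩
      rcases j with ⟨jv, hjvn⟩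
      simp only [] at hi hj
      interval_cases iv <;> interval_cases jv <;>
        simp [Pm, Fin.ext_iff]
    · rw [dif_pos hi, dif_neg hj]
      simp [Fin.ext_iff, Matrix.zero_apply, show ¬((i:ℕ) = (j:ℕ)) from by omega,
        show ¬(1 = (j:ℕ)) from by omega]
  · rw [dif_neg hi]
    simp [Fin.ext_iff, show ¬(0 = (i:ℕ)) from by omega]

lemma Eij10_blk (n : ℕ) (hn : 2 ≤ n) (h0 : 0 < n) (h1 : 1 < n) :
    Eij n ⟨1, h1⟩ ⟨0, h0⟩ = blk n hn Qm 0 := by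
  ext i j
  rw [blk_apply]
  simp only [Eij, Matrix.add_apply, Matrix.one_apply, Matrix.single, Matrix.of_apply]
  by_cases hi : (i : ℕ) < 2
  · by_cases hj : (j : ℕ) < 2
    · rw [dif_pos hi, dif_pos hj]
      rcases i with ⟨iv, hivn⟩
      rcases j with ⟨jv, hjvn⟩
      simp only [] at hi hj
      interval_cases iv <;> interval_cases jv <;>
        simp [Qm, Fin.ext_iff]
    · rw [dif_pos hi, dif_neg hj]
      simp [Fin.ext_iff, Matrix.zero_apply, show ¬((i:ℕ) = (j:ℕ)) from by omega,
        show ¬(0 = (j:ℕ)) from by omega]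
  · rw [dif_neg hi]
    simp [Fin.ext_iff, show ¬(1 = (i:ℕ)) from by omega]

lemma aMat_blk (n : ℕ) (hn : 2 ≤ n) (c : ℕ → ℕ → ℤ) (j : ℕ) :
    aMat n c j = blk n hn 1 (vAm n c j) := by
  ext i k
  rw [blk_apply]
  simp only [aMat, vAm, Matrix.of_apply]
  by_cases hi : (i : ℕ) < 2
  · by_cases hk : (k : ℕ) < 2
    · rw [dif_pos hi, dif_pos hk]
      simp [Matrix.one_apply, Fin.ext_iff, show ¬(2 ≤ (k:ℕ)) from by omega]
    · rw [dif_pos hi, dif_neg hk]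
      have hk1 : ((k : ℕ) - 2) + 3 = (k : ℕ) + 1 := by omega
      simp [Fin.ext_iff, hk1, show ¬((i:ℕ) = (k:ℕ)) from by omega,
        show 2 ≤ (k:ℕ) from by omega]
  · rw [dif_neg hi]
    simp [Fin.ext_iff, show ¬((i:ℕ) = 0) from by omega]

lemma bMat_blk (n : ℕ) (hn : 2 ≤ n) (d : ℕ → ℕ → ℤ) (j : ℕ) :
    bMat n d j = blk n hn 1 (vBm n d j) := by
  ext i k
  rw [blk_apply]
  simp only [bMat, vBm, Matrix.of_apply]
  by_cases hi : (i : ℕ) < 2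
  · by_cases hk : (k : ℕ) < 2
    · rw [dif_pos hi, dif_pos hk]
      simp [Matrix.one_apply, Fin.ext_iff, show ¬(2 ≤ (k:ℕ)) from by omega]
    · rw [dif_pos hi, dif_neg hk]
      have hk1 : ((k : ℕ) - 2) + 3 = (k : ℕ) + 1 := by omega
      simp [Fin.ext_iff, hk1, show ¬((i:ℕ) = (k:ℕ)) from by omega,
        show 2 ≤ (k:ℕ) from by omega]
  · rw [dif_neg hi]
    simp [Fin.ext_iff, show ¬((i:ℕ) = 1) from by omega]

lemma Wmat_blk (n L : ℕ) (hn : 2 ≤ n) (c d : ℕ → ℕ → ℤ) :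
    Wmat n L c d = blk n hn 1 (mVm n L c d) := by
  ext i k
  rw [blk_apply]
  simp only [Wmat, mVm, Matrix.of_apply]
  by_cases hi : (i : ℕ) < 2
  · by_cases hk : (k : ℕ) < 2
    · rw [dif_pos hi, dif_pos hk]
      simp [Matrix.one_apply, Fin.ext_iff, show ¬(2 ≤ (k:ℕ)) from by omega]
    · rw [dif_pos hi, dif_neg hk]
      have hk1 : ((k : ℕ) - 2) + 3 = (k : ℕ) + 1 := by omega
      simp [Fin.ext_iff, hk1, show ¬((i:ℕ) = (k:ℕ)) from by omega,
        show 2 ≤ (k:ℕ) from by omega]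
  · rw [dif_neg hi]
    simp [Fin.ext_iff, show ¬((i:ℕ) = 0) from by omega]

end FibWordAux

open FibWordAux in
/-- The word
e_{1,2}² u (e_{2,1}e_{1,2})^{−L} e_{1,2}⁻¹ v (e_{2,1}e_{1,2})^{−L} e_{1,2}⁻¹,
where u = (e_{2,1}e_{1,2}) a_1 b_1 (e_{2,1}e_{1,2}) a_2 b_2 ⋯ (e_{2,1}e_{1,2}) a_L b_L
and v is u with each a_j, b_j replaced by its inverse, represents the row matrix with
first row (1, 0, m_3, …, m_n) where m_i = Σ_{j=1}^{L}(c_{ij}F_{2j} + d_{ij}F_{2j+1}). -/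
theorem word_for_row_matrix_of_fib_sums (n L : ℕ) (hn : 3 ≤ n) (hL : 1 ≤ L)
    (c d : ℕ → ℕ → ℤ)
    (hc : ∀ i j, 3 ≤ i → i ≤ n → 1 ≤ j → j ≤ L → c i j ∈ ({0, 1, -1} : Set ℤ))
    (hd : ∀ i j, 3 ≤ i → i ≤ n → 1 ≤ j → j ≤ L → d i j ∈ ({0, 1, -1} : Set ℤ))
    (E12 E21 : Matrix.SpecialLinearGroup (Fin n) ℤ)
    (h12 : (E12 : Matrix (Fin n) (Fin n) ℤ) = Eij n ⟨0, by omega⟩ ⟨1, by omega⟩)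
    (h21 : (E21 : Matrix (Fin n) (Fin n) ℤ) = Eij n ⟨1, by omega⟩ ⟨0, by omega⟩)
    (a b : ℕ → Matrix.SpecialLinearGroup (Fin n) ℤ)
    (ha : ∀ j, 1 ≤ j → j ≤ L → ((a j : Matrix (Fin n) (Fin n) ℤ)) = aMat n c j)
    (hb : ∀ j, 1 ≤ j → j ≤ L → ((b j : Matrix (Fin n) (Fin n) ℤ)) = bMat n d j)
    (W : Matrix.SpecialLinearGroup (Fin n) ℤ)
    (hW : (W : Matrix (Fin n) (Fin n) ℤ) = Wmat n L c d) :
    E12 ^ 2 *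
      ((List.range L).map (fun j => (E21 * E12) * a (j + 1) * b (j + 1))).prod *
      (E21 * E12) ^ (-(L : ℤ)) * E12⁻¹ *
      ((List.range L).map (fun j => (E21 * E12) * (a (j + 1))⁻¹ * (b (j + 1))⁻¹)).prod *
      (E21 * E12) ^ (-(L : ℤ)) * E12⁻¹
      = W := by
  have h2 : 2 ≤ n := by omega
  have hE12m : (E12 : Matrix (Fin n) (Fin n) ℤ) = blk n h2 Pm 0 := by
    rw [h12, Eij01_blk n h2]
  have hE21m : (E21 : Matrix (Fin n) (Fin n) ℤ) = blk n h2 Qm 0 := by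
    rw [h21, Eij10_blk n h2]
  have hT : ((E21 * E12 : Matrix.SpecialLinearGroup (Fin n) ℤ) : Matrix (Fin n) (Fin n) ℤ)
      = blk n h2 Tm 0 := by
    rw [Matrix.SpecialLinearGroup.coe_mul, hE21m, hE12m, blk_mul, hQP, Matrix.mul_zero, add_zero]
  have hE12pow : ((E12 ^ 2 : Matrix.SpecialLinearGroup (Fin n) ℤ) : Matrix (Fin n) (Fin n) ℤ)
      = blk n h2 (Pm ^ 2) 0 := by
    rw [Matrix.SpecialLinearGroup.coe_pow, hE12m, blk_pow]
  have hE12inv : ((E12⁻¹ : Matrix.SpecialLinearGroup (Fin n) ℤ) : Matrix (Fin n) (Fin n) ℤ)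
      = blk n h2 Pim 0 := by
    apply coe_inv_eq
    rw [hE12m, blk_mul, hPPi, Matrix.mul_zero, add_zero, blk_one]
  have hTneg : (((E21 * E12) ^ (-(L : ℤ)) : Matrix.SpecialLinearGroup (Fin n) ℤ) :
      Matrix (Fin n) (Fin n) ℤ) = blk n h2 (Tim ^ L) 0 := by
    rw [zpow_neg, zpow_natCast]
    apply coe_inv_eq
    rw [Matrix.SpecialLinearGroup.coe_pow, hT, blk_pow, blk_mul, hTLTiL,
      Matrix.mul_zero, add_zero, blk_one]
  have hfac1 : ∀ j, 1 ≤ j → j ≤ L →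
      (((E21 * E12) * a j * b j : Matrix.SpecialLinearGroup (Fin n) ℤ) :
        Matrix (Fin n) (Fin n) ℤ) = blk n h2 Tm (Tm * (vAm n c j + vBm n d j)) := by
    intro j hj1 hjL
    rw [Matrix.SpecialLinearGroup.coe_mul, Matrix.SpecialLinearGroup.coe_mul, hT,
      ha j hj1 hjL, hb j hj1 hjL, aMat_blk n h2, bMat_blk n h2, blk_mul, blk_mul]
    simp only [mul_one, add_zero]
    rw [Matrix.mul_add, add_comm (Tm * vBm n d j) (Tm * vAm n c j)]
  have hainv : ∀ j, 1 ≤ j → j ≤ L →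
      (((a j)⁻¹ : Matrix.SpecialLinearGroup (Fin n) ℤ) : Matrix (Fin n) (Fin n) ℤ)
        = blk n h2 1 (-(vAm n c j)) := by
    intro j hj1 hjL
    apply coe_inv_eq
    rw [ha j hj1 hjL, aMat_blk n h2, blk_mul, one_mul, Matrix.one_mul, neg_add_cancel, blk_one]
  have hbinv : ∀ j, 1 ≤ j → j ≤ L →
      (((b j)⁻¹ : Matrix.SpecialLinearGroup (Fin n) ℤ) : Matrix (Fin n) (Fin n) ℤ)
        = blk n h2 1 (-(vBm n d j)) := by
    intro j hj1 hjL
    apply coe_inv_eq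
    rw [hb j hj1 hjL, bMat_blk n h2, blk_mul, one_mul, Matrix.one_mul, neg_add_cancel, blk_one]
  have hfac2 : ∀ j, 1 ≤ j → j ≤ L →
      (((E21 * E12) * (a j)⁻¹ * (b j)⁻¹ : Matrix.SpecialLinearGroup (Fin n) ℤ) :
        Matrix (Fin n) (Fin n) ℤ) = blk n h2 Tm (Tm * (-(vAm n c j + vBm n d j))) := by
    intro j hj1 hjL
    rw [Matrix.SpecialLinearGroup.coe_mul, Matrix.SpecialLinearGroup.coe_mul, hT,
      hainv j hj1 hjL, hbinv j hj1 hjL, blk_mul, blk_mul]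
    simp only [mul_one, add_zero, Matrix.mul_neg, Matrix.mul_add, neg_add]
    rw [add_comm (-(Tm * vBm n d j)) (-(Tm * vAm n c j))]
  have hu := prod_blk n h2 (fun j => (E21 * E12) * a j * b j)
    (fun j => vAm n c j + vBm n d j) L hfac1
  have hv := prod_blk n h2 (fun j => (E21 * E12) * (a j)⁻¹ * (b j)⁻¹)
    (fun j => -(vAm n c j + vBm n d j)) L hfac2
  set S := ∑ j ∈ Finset.Icc 1 L, Tm ^ j * (vAm n c j + vBm n d j) with hS
  have hsneg : ∑ j ∈ Finset.Icc 1 L, Tm ^ j * (-(vAm n c j + vBm n d j)) = -S := by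
    rw [hS, ← Finset.sum_neg_distrib]
    exact Finset.sum_congr rfl fun x _ => Matrix.mul_neg _ _
  rw [hsneg] at hv
  apply Subtype.coe_injective
  dsimp only
  rw [hW, Wmat_blk n L h2 c d]
  simp only [Matrix.SpecialLinearGroup.coe_mul]
  rw [hE12pow, hu, hTneg, hE12inv, hv, blk_mul, blk_mul, blk_mul, blk_mul, blk_mul, blk_mul]
  simp only [Matrix.mul_zero, add_zero, zero_add]
  rw [mul_assoc (Pm ^ 2) (Tm ^ L) (Tim ^ L), hTLTiL, mul_one, hPsqPi,
    mul_assoc Pm (Tm ^ L) (Tim ^ L), hTLTiL, mul_one, hPPi]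
  refine congrArg (blk n h2 1) ?_
  have hP2 : (!![1, 1; 0, 1] : Matrix (Fin 2) (Fin 2) ℤ) ^ 2 = !![1, 2; 0, 1] := by
    rw [pow_two, Matrix.mul_fin_two]; norm_num
  have hS1 : ∀ k : Fin (n - 2), S 1 k =
      ∑ j ∈ Finset.Icc 1 L, (c ((k : ℕ) + 3) j * (Nat.fib (2 * j) : ℤ) +
        d ((k : ℕ) + 3) j * (Nat.fib (2 * j + 1) : ℤ)) := by
    intro k
    rw [hS, Matrix.sum_apply]
    refine Finset.sum_congr rfl fun j hj => ?_
    obtain ⟨j', rfl⟩ : ∃ j', j = j' + 1 :=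
      ⟨j - 1, by have := (Finset.mem_Icc.mp hj).1; omega⟩
    rw [Tm_pow_fib j', Matrix.mul_apply, Fin.sum_univ_two]
    simp only [vAm, vBm, Matrix.add_apply, Matrix.of_apply]
    norm_num
    rw [show 2 * j' + 2 + 1 = 2 * j' + 3 from by ring]
    ring
  ext i k
  fin_cases i
  · simp only [Matrix.add_apply, Matrix.mul_apply, Fin.sum_univ_two, hP2, Pm,
      Matrix.neg_apply, mVm, Matrix.of_apply]
    norm_num
    linarith [hS1 k]
  · simp only [Matrix.add_apply, Matrix.mul_apply, Fin.sum_univ_two, hP2, Pm,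
      Matrix.neg_apply, mVm, Matrix.of_apply]
    norm_num
end

section
/- Let n ≥ 3 and k ≥ 2 be integers and let M ∈ SL_n(ℤ/kℤ). Then M can be written as a product of 3n matrices in SL_n(ℤ/kℤ), of which n are row matrices, n are column matrices, and n are elementary matrices (matrices differing from the identity in at most one off-diagonal entry). -/
/-- A row matrix: all diagonal entries are 1 and it differs from the identity only in
one row. -/
def IsRowMatrix {n k : ℕ} (M : Matrix (Fin n) (Fin n) (ZMod k)) : Prop :=
  (∀ i, M i i = 1) ∧ ∃ r : Fin n, ∀ i j, i ≠ r → i ≠ j → M i j = 0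

/-- A column matrix: all diagonal entries are 1 and it differs from the identity only
in one column. -/
def IsColumnMatrix {n k : ℕ} (M : Matrix (Fin n) (Fin n) (ZMod k)) : Prop :=
  (∀ i, M i i = 1) ∧ ∃ c : Fin n, ∀ i j, j ≠ c → i ≠ j → M i j = 0

/-- An elementary matrix: 1's on the diagonal, differing from the identity in at most
one off-diagonal entry. -/
def IsElementaryMatrix {n k : ℕ} (M : Matrix (Fin n) (Fin n) (ZMod k)) : Prop :=
  (∀ i, M i i = 1) ∧
  ∃ r c : Fin n, r ≠ c ∧ ∀ i j, i ≠ j → ¬(i = r ∧ j = c) → M i j = 0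

open Matrix Finset

variable {n k : ℕ}

/-- Row matrix with free row `r` given by `v` (expects `v r = 0`). -/
def rowMat (r : Fin n) (v : Fin n → ZMod k) : Matrix (Fin n) (Fin n) (ZMod k) :=
  Matrix.of fun x j => (if x = j then 1 else 0) + (if x = r then v j else 0)

lemma rowMat_apply (r : Fin n) (v : Fin n → ZMod k) (x j : Fin n) :
    rowMat r v x j = (if x = j then 1 else 0) + (if x = r then v j else 0) := rfl

lemma mul_rowMat (M : Matrix (Fin n) (Fin n) (ZMod k)) (r : Fin n) (v : Fin n → ZMod k)
    (a j : Fin n) : (M * rowMat r v) a j = M a j + M a r * v j := by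
  rw [Matrix.mul_apply]
  have h : ∀ x : Fin n, M a x * rowMat r v x j
      = (if x = j then M a x else 0) + (if x = r then M a x * v j else 0) := by
    intro x
    rw [rowMat_apply, mul_add]
    congr 1
    · split <;> simp
    · split <;> simp
  rw [Finset.sum_congr rfl fun x _ => h x, Finset.sum_add_distrib]
  simp

lemma rowMat_mul_rowMat (r : Fin n) (v w : Fin n → ZMod k) (hv : v r = 0) :
    rowMat r v * rowMat r w = rowMat r (v + w) := by
  ext a j
  rw [mul_rowMat, rowMat_apply, rowMat_apply, rowMat_apply, Pi.add_apply]
  by_cases h : a = r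
  · subst h
    simp [hv]
    ring
  · simp [h]

lemma rowMat_zero (r : Fin n) : rowMat (k := k) r 0 = 1 := by
  ext a j
  rw [rowMat_apply]
  simp [Matrix.one_apply]

lemma det_rowMat (r : Fin n) (v : Fin n → ZMod k) (hv : v r = 0) :
    (rowMat r v).det = 1 := by
  have hv' : (fun j : Fin n => if (j : ℕ) < (r : ℕ) then v j else 0)
      + (fun j : Fin n => if (r : ℕ) < (j : ℕ) then v j else 0) = v := by
    funext j
    simp only [Pi.add_apply]
    by_cases h1 : (j : ℕ) < (r : ℕ)
    · rw [if_pos h1, if_neg (by omega), add_zero]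
    · by_cases h2 : (r : ℕ) < (j : ℕ)
      · rw [if_neg h1, if_pos h2, zero_add]
      · have hj : j = r := Fin.ext (by omega)
        subst hj
        simp [h1, h2, hv]
  have hsplit : rowMat r v
      = rowMat r (fun j : Fin n => if (j : ℕ) < (r : ℕ) then v j else 0)
        * rowMat r (fun j : Fin n => if (r : ℕ) < (j : ℕ) then v j else 0) := by
    rw [rowMat_mul_rowMat _ _ _ (by simp), hv']
  rw [hsplit, Matrix.det_mul]
  have h1 : (rowMat r (fun j : Fin n => if (j : ℕ) < (r : ℕ) then v j else 0)).det = 1 := by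
    rw [Matrix.det_of_lowerTriangular]
    · apply Finset.prod_eq_one
      intro x _
      rw [rowMat_apply, if_pos rfl]
      by_cases h : x = r
      · rw [if_pos h, if_neg (by subst h; omega), add_zero]
      · rw [if_neg h, add_zero]
    · intro a b hab
      have hab' : (a : ℕ) < (b : ℕ) := hab
      rw [rowMat_apply, if_neg (by intro h; subst h; omega)]
      by_cases h : a = r
      · rw [if_pos h, if_neg (by subst h; omega), add_zero]
      · rw [if_neg h, add_zero]
  have h2 : (rowMat r (fun j : Fin n => if (r : ℕ) < (j : ℕ) then v j else 0)).det = 1 := by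
    rw [Matrix.det_of_upperTriangular]
    · apply Finset.prod_eq_one
      intro x _
      rw [rowMat_apply, if_pos rfl]
      by_cases h : x = r
      · rw [if_pos h, if_neg (by subst h; omega), add_zero]
      · rw [if_neg h, add_zero]
    · intro a b hab
      have hab' : (b : ℕ) < (a : ℕ) := hab
      rw [rowMat_apply, if_neg (by intro h; subst h; omega)]
      by_cases h : a = r
      · rw [if_pos h, if_neg (by subst h; omega), add_zero]
      · rw [if_neg h, add_zero]
  rw [h1, h2, mul_one]

lemma isRowMatrix_rowMat (r : Fin n) (v : Fin n → ZMod k) (hv : v r = 0) :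
    IsRowMatrix (rowMat r v) := by
  constructor
  · intro a
    rw [rowMat_apply]
    by_cases h : a = r <;> simp [h, hv]
  · exact ⟨r, fun a j har haj => by rw [rowMat_apply]; simp [har, haj]⟩

/-- Column matrix with free column `c` given by `w` (expects `w c = 0`). -/
def colMat (c : Fin n) (w : Fin n → ZMod k) : Matrix (Fin n) (Fin n) (ZMod k) :=
  (rowMat c w).transpose

lemma colMat_apply (c : Fin n) (w : Fin n → ZMod k) (x j : Fin n) :
    colMat c w x j = (if x = j then 1 else 0) + (if j = c then w x else 0) := by
  show rowMat c w j x = _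
  rw [rowMat_apply]
  by_cases h : x = j
  · subst h; simp
  · rw [if_neg h, if_neg (fun hh => h hh.symm)]

lemma mul_colMat (M : Matrix (Fin n) (Fin n) (ZMod k)) (c : Fin n) (w : Fin n → ZMod k)
    (a j : Fin n) :
    (M * colMat c w) a j = M a j + (if j = c then ∑ x, M a x * w x else 0) := by
  rw [Matrix.mul_apply]
  have h : ∀ x : Fin n, M a x * colMat c w x j
      = (if x = j then M a x else 0) + (if j = c then M a x * w x else 0) := by
    intro x
    rw [colMat_apply, mul_add]
    congr 1
    · split <;> simp
    · split <;> simp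
  rw [Finset.sum_congr rfl fun x _ => h x, Finset.sum_add_distrib]
  congr 1
  · simp
  · split
    · rfl
    · exact Finset.sum_const_zero

lemma colMat_mul_colMat (c : Fin n) (v w : Fin n → ZMod k) (hw : w c = 0) :
    colMat c v * colMat c w = colMat c (v + w) := by
  unfold colMat
  rw [← Matrix.transpose_mul, rowMat_mul_rowMat _ _ _ hw]
  rw [add_comm w v]

lemma colMat_zero (c : Fin n) : colMat (k := k) c 0 = 1 := by
  unfold colMat
  rw [rowMat_zero, Matrix.transpose_one]

lemma det_colMat (c : Fin n) (w : Fin n → ZMod k) (hw : w c = 0) :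
    (colMat c w).det = 1 := by
  unfold colMat
  rw [Matrix.det_transpose]
  exact det_rowMat c w hw

lemma isColumnMatrix_colMat (c : Fin n) (w : Fin n → ZMod k) (hw : w c = 0) :
    IsColumnMatrix (colMat c w) := by
  constructor
  · intro a
    rw [colMat_apply]
    by_cases h : a = c <;> simp [h, hw]
  · exact ⟨c, fun a j hjc haj => by rw [colMat_apply]; simp [hjc, haj]⟩
lemma exists_bezout_sum {k : ℕ} [NeZero k] {ι : Type} [DecidableEq ι]
    (f : ι → ZMod k) (s : Finset ι) :
    ∃ c : ι → ZMod k,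
      ∑ j ∈ s, c j * f j = ((Nat.gcd (s.gcd fun j => (f j).val) k : ℕ) : ZMod k) := by
  classical
  induction s using Finset.induction with
  | empty =>
      refine ⟨0, ?_⟩
      simp [ZMod.natCast_self]
  | @insert a s' ha ih =>
      obtain ⟨c, hc⟩ := ih
      set A : ℕ := (f a).val with hA
      set g0 : ℕ := Nat.gcd (s'.gcd fun j => (f j).val) k with hg0
      have hbez : ((Nat.gcd A g0 : ℕ) : ZMod k)
          = (A : ZMod k) * ((Nat.gcdA A g0 : ℤ) : ZMod k)
            + (g0 : ZMod k) * ((Nat.gcdB A g0 : ℤ) : ZMod k) := by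
        have := Nat.gcd_eq_gcd_ab A g0
        calc ((Nat.gcd A g0 : ℕ) : ZMod k) = (((Nat.gcd A g0 : ℕ) : ℤ) : ZMod k) := by
              push_cast; ring
          _ = ((A * Nat.gcdA A g0 + g0 * Nat.gcdB A g0 : ℤ) : ZMod k) := by rw [← this]
          _ = _ := by push_cast; ring
      refine ⟨fun j => if j = a then ((Nat.gcdA A g0 : ℤ) : ZMod k)
        else ((Nat.gcdB A g0 : ℤ) : ZMod k) * c j, ?_⟩
      rw [Finset.sum_insert ha]
      simp only []
      rw [if_pos trivial]
      have hsum : ∑ j ∈ s', (if j = a then ((Nat.gcdA A g0 : ℤ) : ZMod k)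
          else ((Nat.gcdB A g0 : ℤ) : ZMod k) * c j) * f j
          = ((Nat.gcdB A g0 : ℤ) : ZMod k) * ∑ j ∈ s', c j * f j := by
        rw [Finset.mul_sum]
        refine Finset.sum_congr rfl fun j hj => ?_
        rw [if_neg (by rintro rfl; exact ha hj), mul_assoc]
      rw [hsum, hc]
      have hgi : (insert a s').gcd (fun j => (f j).val) = Nat.gcd A (s'.gcd fun j => (f j).val) :=
        Finset.gcd_insert
      rw [hgi]
      have hassoc : Nat.gcd (Nat.gcd A (s'.gcd fun j => (f j).val)) k = Nat.gcd A g0 := by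
        rw [hg0, Nat.gcd_assoc]
      rw [hassoc, hbez]
      have hAf : ((A : ℕ) : ZMod k) = f a := ZMod.natCast_zmod_val (f a)
      rw [hAf]
      ring
lemma exists_pivot_fix {n k : ℕ} [NeZero k] (i : ℕ) (hi : i + 1 < n)
    (b c : Fin n → ZMod k) (hb : ∀ j : Fin n, (j : ℕ) < i → b j = 0)
    (hc : ∑ j, b j * c j = 1) :
    ∃ (t : ZMod k) (s : Fin n → ZMod k), (∀ j : Fin n, (j : ℕ) ≤ i → s j = 0) ∧
      b ⟨i, by omega⟩ + ∑ j, s j *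
        (b j + if (j : ℕ) = i + 1 then t * b ⟨i, by omega⟩ else 0) = 1 := by
  classical
  set I : Fin n := ⟨i, by omega⟩ with hI
  set P : Fin n := ⟨i + 1, hi⟩ with hP
  have hIP : I ≠ P := by
    intro h
    have := congrArg Fin.val h
    simp [hI, hP] at this
  set y : ℕ := (b P).val with hy
  set T : ℕ := ∏ p ∈ k.primeFactors.filter (fun p => ¬ p ∣ y), p with hT
  set t : ZMod k := (T : ZMod k) with ht
  set f : Fin n → ZMod k :=
    fun j => b j + if (j : ℕ) = i + 1 then t * b I else 0 with hf
  set F : Finset (Fin n) := Finset.univ.filter (fun j => i < (j : ℕ)) with hF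
  have hPF : P ∈ F := by simp [hF, hP]
  have hG : Nat.gcd (F.gcd fun j => (f j).val) k = 1 := by
    by_contra hne
    obtain ⟨p, pp, hpG⟩ := Nat.exists_prime_and_dvd hne
    have hpk : p ∣ k := hpG.trans (Nat.gcd_dvd_right _ _)
    haveI : Fact p.Prime := ⟨pp⟩
    set ψ : ZMod k →+* ZMod p := ZMod.castHom hpk (ZMod p) with hψ
    have hψval : ∀ u : ZMod k, ψ u = ((u.val : ℕ) : ZMod p) := by
      intro u
      rw [hψ, ZMod.castHom_apply, ← ZMod.natCast_val]
    have hval0 : ∀ u : ZMod k, p ∣ u.val → ψ u = 0 := by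
      intro u hu
      rw [hψval]
      exact (ZMod.natCast_eq_zero_iff _ _).mpr hu
    have hf0 : ∀ j ∈ F, ψ (f j) = 0 := by
      intro j hj
      exact hval0 _ ((hpG.trans (Nat.gcd_dvd_left _ _)).trans (Finset.gcd_dvd hj))
    have hψt : ψ t = ((T : ℕ) : ZMod p) := by rw [ht]; simp
    -- the key sum in ZMod p
    have hsum : (1 : ZMod p) = ∑ j, ψ (b j) * ψ (c j) := by
      rw [← map_one ψ, ← hc, map_sum]
      exact Finset.sum_congr rfl fun j _ => by rw [_root_.map_mul]
    have hbP' : ψ (b P) = - (ψ t * ψ (b I)) := by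
      have h0 := hf0 P hPF
      rw [hf] at h0
      simp only [hP] at h0
      rw [if_pos trivial, map_add, _root_.map_mul] at h0
      linear_combination h0
    have hbj : ∀ j : Fin n, j ≠ I → j ≠ P → ψ (b j) = 0 := by
      intro j hjI hjP
      rcases lt_trichotomy (j : ℕ) i with h | h | h
      · rw [hb j h, map_zero]
      · exact absurd (Fin.ext h : j = I) hjI
      · have hjne : (j : ℕ) ≠ i + 1 := by
          intro hh; exact hjP (Fin.ext hh)
        have hjF : j ∈ F := by simp [hF, h]
        have := hf0 j hjF
        rw [hf] at this
        simp only [] at this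
        rwa [if_neg hjne, add_zero] at this
    have hsum2 : (1 : ZMod p) = ψ (b I) * ψ (c I) + ψ (b P) * ψ (c P) := by
      rw [hsum]
      rw [← Finset.sum_subset (Finset.subset_univ {I, P})]
      · rw [Finset.sum_pair hIP]
      · intro j _ hj
        simp only [Finset.mem_insert, Finset.mem_singleton, not_or] at hj
        rw [hbj j hj.1 hj.2, zero_mul]
    have hx : ψ (b I) ≠ 0 := by
      intro h0
      rw [h0, hbP'] at hsum2
      simp [h0] at hsum2
    by_cases hpy : p ∣ y
    · have h1 : ψ (b P) = 0 := hval0 _ hpy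
      have ht0 : ψ t = 0 := by
        have : ψ t * ψ (b I) = 0 := by
          rw [← neg_eq_zero, ← hbP', h1]
        rcases mul_eq_zero.mp this with h | h
        · exact h
        · exact absurd h hx
      have hpT : p ∣ T := by
        rw [hψt] at ht0
        exact (ZMod.natCast_eq_zero_iff _ _).mp ht0
      have hcop : Nat.Coprime p T := by
        rw [hT]
        apply Nat.Coprime.prod_right
        intro q hq
        rw [Finset.mem_filter] at hq
        have hqprime : q.Prime := Nat.prime_of_mem_primeFactors hq.1
        have hqp : q ≠ p := by
          intro hh; subst hh; exact hq.2 hpy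
        exact (Nat.coprime_primes pp hqprime).mpr (Ne.symm hqp)
      exact pp.ne_one (hcop.eq_one_of_dvd hpT)
    · have hpT : p ∣ T := by
        apply Finset.dvd_prod_of_mem
        rw [Finset.mem_filter, Nat.mem_primeFactors]
        exact ⟨⟨pp, hpk, NeZero.ne k⟩, hpy⟩
      have ht0 : ψ t = 0 := by
        rw [hψt]
        exact (ZMod.natCast_eq_zero_iff _ _).mpr hpT
      have : ψ (b P) = 0 := by rw [hbP', ht0, zero_mul, neg_zero]
      rw [hψval] at this
      exact hpy ((ZMod.natCast_eq_zero_iff _ _).mp this)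
  obtain ⟨c', hc'⟩ := exists_bezout_sum f F
  rw [hG] at hc'
  rw [Nat.cast_one] at hc'
  refine ⟨t, fun j : Fin n => if i < (j : ℕ) then (1 - b I) * c' j else 0,
    fun j hj => if_neg (by omega), ?_⟩
  have hsplit : ∑ j : Fin n, (if i < (j : ℕ) then (1 - b I) * c' j else 0) *
      (b j + if (j : ℕ) = i + 1 then t * b I else 0)
      = ∑ j ∈ F, (1 - b I) * (c' j * f j) := by
    rw [hF, Finset.sum_filter]
    refine Finset.sum_congr rfl fun j _ => ?_
    by_cases h : i < (j : ℕ)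
    · rw [if_pos h, if_pos h, hf]
      ring
    · rw [if_neg h, if_neg h, zero_mul]
  rw [hsplit, ← Finset.mul_sum, hc']
  ring
def cleanRows {n k : ℕ} (i : ℕ) (M : Matrix (Fin n) (Fin n) (ZMod k)) : Prop :=
  ∀ a : Fin n, (a : ℕ) < i → ∀ j, M a j = if a = j then 1 else 0

lemma row_unimodular {n k : ℕ} (i : ℕ) (hi : i < n)
    (M : Matrix.SpecialLinearGroup (Fin n) (ZMod k))
    (hM : cleanRows i (M : Matrix (Fin n) (Fin n) (ZMod k))) :
    ∃ c : Fin n → ZMod k,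
      ∑ j : Fin n,
        (if (j : ℕ) < i then 0 else (M : Matrix (Fin n) (Fin n) (ZMod k)) ⟨i, hi⟩ j) * c j
        = 1 := by
  classical
  set I : Fin n := ⟨i, hi⟩ with hIdef
  set Mv : Matrix (Fin n) (Fin n) (ZMod k) := (M : Matrix (Fin n) (Fin n) (ZMod k)) with hMv
  set Pm : Matrix (Fin n) (Fin n) (ZMod k) :=
    Matrix.of fun a j => if a = j then 1 else
      if (j : ℕ) < i ∧ i ≤ (a : ℕ) then -(Mv a j) else 0 with hPm
  have hPmdet : Pm.det = 1 := by
    rw [Matrix.det_of_lowerTriangular]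
    · apply Finset.prod_eq_one
      intro x _
      show (if x = x then _ else _) = 1
      rw [if_pos rfl]
    · intro a b hab
      have hab' : (a : ℕ) < (b : ℕ) := hab
      show (if a = b then _ else _) = 0
      rw [if_neg (by intro h; subst h; omega), if_neg (by omega)]
  set M0 : Matrix.SpecialLinearGroup (Fin n) (ZMod k) :=
    ⟨Pm, hPmdet⟩ * M with hM0
  have hinv : (M0 : Matrix (Fin n) (Fin n) (ZMod k))
      * ((M0⁻¹ : Matrix.SpecialLinearGroup (Fin n) (ZMod k)) : Matrix (Fin n) (Fin n) (ZMod k))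
      = 1 := by
    rw [← Matrix.SpecialLinearGroup.coe_mul, mul_inv_cancel]
    rfl
  have hentry : ∑ j, (M0 : Matrix (Fin n) (Fin n) (ZMod k)) I j
      * ((M0⁻¹ : Matrix.SpecialLinearGroup (Fin n) (ZMod k)) : Matrix (Fin n) (Fin n) (ZMod k)) j I = 1 := by
    have h := congrFun (congrFun hinv I) I
    rw [Matrix.mul_apply] at h
    rw [h]
    exact Matrix.one_apply_eq I
  have hM0row : ∀ j, (M0 : Matrix (Fin n) (Fin n) (ZMod k)) I j
      = if (j : ℕ) < i then 0 else Mv I j := by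
    intro j
    have hco : (M0 : Matrix (Fin n) (Fin n) (ZMod k)) = Pm * Mv := by
      rw [hM0]; rfl
    rw [hco, Matrix.mul_apply]
    have hP : ∀ x : Fin n, Pm I x
        = (if I = x then 1 else 0) + (if (x : ℕ) < i then -(Mv I x) else 0) := by
      intro x
      show (if I = x then _ else _) = _
      by_cases h : I = x
      · rw [if_pos h, if_pos h]
        have : ¬ (x : ℕ) < i := by
          subst h; simp [hIdef]
        rw [if_neg this, add_zero]
      · rw [if_neg h, if_neg h, zero_add]
        by_cases h2 : (x : ℕ) < i
        · rw [if_pos ⟨h2, le_refl i⟩, if_pos h2]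
        · rw [if_neg (by tauto), if_neg h2]
    have hterm : ∀ x : Fin n, Pm I x * Mv x j
        = (if I = x then Mv x j else 0) + (if (x : ℕ) < i then -(Mv I x) * Mv x j else 0) := by
      intro x
      rw [hP x, add_mul]
      congr 1
      · split <;> simp
      · split <;> simp
    rw [Finset.sum_congr rfl fun x _ => hterm x, Finset.sum_add_distrib]
    have h1 : ∑ x, (if I = x then Mv x j else 0) = Mv I j := by simp
    have h2 : ∑ x : Fin n, (if (x : ℕ) < i then -(Mv I x) * Mv x j else 0)
        = if (j : ℕ) < i then -(Mv I j) else 0 := by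
      have hterm2 : ∀ x : Fin n, (if (x : ℕ) < i then -(Mv I x) * Mv x j else 0)
          = if x = j ∧ (j : ℕ) < i then -(Mv I j) else 0 := by
        intro x
        by_cases hx : (x : ℕ) < i
        · rw [if_pos hx]
          have := hM x hx j
          rw [hMv] at this ⊢
          rw [this]
          by_cases hxj : x = j
          · subst hxj
            rw [if_pos rfl, if_pos ⟨rfl, hx⟩, mul_one]
          · rw [if_neg hxj, if_neg (by tauto), mul_zero]
        · rw [if_neg hx, if_neg (by rintro ⟨rfl, hh⟩; exact hx hh)]
      rw [Finset.sum_congr rfl fun x _ => hterm2 x]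
      by_cases hj : (j : ℕ) < i
      · rw [Finset.sum_eq_single j]
        · rw [if_pos ⟨rfl, hj⟩, if_pos hj]
        · intro x _ hx
          rw [if_neg (by tauto)]
        · intro h; exact absurd (Finset.mem_univ j) h
      · rw [if_neg hj]
        apply Finset.sum_eq_zero
        intro x _
        rw [if_neg (by tauto)]
    rw [h1, h2]
    by_cases hj : (j : ℕ) < i
    · rw [if_pos hj, if_pos hj]
      ring
    · rw [if_neg hj, if_neg hj, add_zero]
  refine ⟨fun j => ((M0⁻¹ : Matrix.SpecialLinearGroup (Fin n) (ZMod k))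
    : Matrix (Fin n) (Fin n) (ZMod k)) j I, ?_⟩
  simp only [hM0row] at hentry
  exact hentry
lemma isElementaryMatrix_colMat_single {n k : ℕ} (r c : Fin n) (hrc : r ≠ c) (u : ZMod k) :
    IsElementaryMatrix (colMat c (fun a => if a = r then u else 0)) := by
  constructor
  · intro a
    rw [colMat_apply, if_pos rfl]
    by_cases h : a = c
    · rw [if_pos h, if_neg (by rw [h]; exact fun hh => hrc hh.symm), add_zero]
    · rw [if_neg h, add_zero]
  · refine ⟨r, c, hrc, fun x j hxj hnot => ?_⟩
    rw [colMat_apply, if_neg hxj, zero_add]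
    by_cases hj : j = c
    · rw [if_pos hj, if_neg (fun hx => hnot ⟨hx, hj⟩)]
    · rw [if_neg hj]

lemma step_lemma {n k : ℕ} [NeZero k] (i : ℕ) (hi : i + 1 < n)
    (M : Matrix.SpecialLinearGroup (Fin n) (ZMod k))
    (hM : cleanRows i (M : Matrix (Fin n) (Fin n) (ZMod k))) :
    ∃ M' Rm Cm Em : Matrix.SpecialLinearGroup (Fin n) (ZMod k),
      cleanRows (i + 1) (M' : Matrix (Fin n) (Fin n) (ZMod k)) ∧
      IsRowMatrix (Rm : Matrix (Fin n) (Fin n) (ZMod k)) ∧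
      IsColumnMatrix (Cm : Matrix (Fin n) (Fin n) (ZMod k)) ∧
      IsElementaryMatrix (Em : Matrix (Fin n) (Fin n) (ZMod k)) ∧
      M = M' * Rm * Cm * Em := by
  classical
  set Mv : Matrix (Fin n) (Fin n) (ZMod k) := (M : Matrix (Fin n) (Fin n) (ZMod k)) with hMv
  set I : Fin n := ⟨i, by omega⟩ with hIdef
  set P : Fin n := ⟨i + 1, hi⟩ with hPdef
  have hIP : I ≠ P := by
    intro h
    have := congrArg Fin.val h
    simp [hIdef, hPdef] at this
  obtain ⟨c, hc⟩ := row_unimodular i (by omega) M hM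
  set b : Fin n → ZMod k := fun j => if (j : ℕ) < i then 0 else Mv I j with hbdef
  have hb : ∀ j : Fin n, (j : ℕ) < i → b j = 0 := fun j hj => if_pos hj
  have hbI : b I = Mv I I := by rw [hbdef]; exact if_neg (lt_irrefl i)
  obtain ⟨t, s, hs0, hsum⟩ := exists_pivot_fix i hi b c hb hc
  -- the elementary matrix E (right multiplication adds t * column I to column P)
  set w : Fin n → ZMod k := fun a => if a = I then t else 0 with hwdef
  have hwP : w P = 0 := by rw [hwdef]; exact if_neg (fun h => hIP h.symm)
  set E : Matrix.SpecialLinearGroup (Fin n) (ZMod k) :=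
    ⟨colMat P w, det_colMat P w hwP⟩ with hEdef
  set M1 : Matrix.SpecialLinearGroup (Fin n) (ZMod k) := M * E with hM1def
  set M1v : Matrix (Fin n) (Fin n) (ZMod k) := (M1 : Matrix (Fin n) (Fin n) (ZMod k)) with hM1v
  have h1 : ∀ a j, M1v a j = Mv a j + (if j = P then Mv a I * t else 0) := by
    intro a j
    have hco : M1v = Mv * colMat P w := by
      rw [hM1v, hM1def, Matrix.SpecialLinearGroup.coe_mul]
    rw [hco, mul_colMat]
    congr 1
    split
    · rw [hwdef]
      have hx : ∀ x ∈ Finset.univ, Mv a x * (if x = I then t else 0)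
          = if x = I then Mv a x * t else 0 := by
        intro x _
        rw [mul_ite, mul_zero]
      rw [Finset.sum_congr rfl hx]
      simp
    · rfl
  -- the column matrix C (fixes the pivot to 1)
  have hsI : s I = 0 := hs0 I (le_refl i)
  set C : Matrix.SpecialLinearGroup (Fin n) (ZMod k) :=
    ⟨colMat I s, det_colMat I s hsI⟩ with hCdef
  set M2 : Matrix.SpecialLinearGroup (Fin n) (ZMod k) := M1 * C with hM2def
  set M2v : Matrix (Fin n) (Fin n) (ZMod k) := (M2 : Matrix (Fin n) (Fin n) (ZMod k)) with hM2v
  have h2 : ∀ a j, M2v a j = M1v a j + (if j = I then ∑ x, M1v a x * s x else 0) := by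
    intro a j
    have hco : M2v = M1v * colMat I s := by
      rw [hM2v, hM2def, Matrix.SpecialLinearGroup.coe_mul, hM1v]
    rw [hco, mul_colMat]
  have hpivot : M2v I I = 1 := by
    rw [h2, if_pos rfl, h1, if_neg hIP, add_zero]
    have hterm : ∀ x : Fin n, M1v I x * s x
        = s x * (b x + if (x : ℕ) = i + 1 then t * b I else 0) := by
      intro x
      rcases le_or_gt (x : ℕ) i with hx | hx
      · rw [hs0 x hx, zero_mul, mul_zero]
      · have hbx : b x = Mv I x := by
          rw [hbdef]
          show (if (x : ℕ) < i then 0 else Mv I x) = Mv I x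
          rw [if_neg (by omega)]
        rw [h1, hbx, hbI]
        have : (x = P) ↔ ((x : ℕ) = i + 1) := by
          constructor
          · intro h; rw [h, hPdef]
          · intro h; exact Fin.ext h
        by_cases hxP : x = P
        · rw [if_pos hxP, if_pos (this.mp hxP)]
          ring
        · rw [if_neg hxP, if_neg (fun h => hxP (this.mpr h)), add_zero]
          ring
    rw [Finset.sum_congr rfl fun x _ => hterm x]
    rw [← hbI]
    exact hsum
  -- the row matrix R (clears row I)
  set Rv : Fin n → ZMod k := fun j => if j = I then 0 else -(M2v I j) with hRvdef
  have hRvI : Rv I = 0 := if_pos rfl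
  set Rf : Matrix.SpecialLinearGroup (Fin n) (ZMod k) :=
    ⟨rowMat I Rv, det_rowMat I Rv hRvI⟩ with hRfdef
  set M' : Matrix.SpecialLinearGroup (Fin n) (ZMod k) := M2 * Rf with hM'def
  set M'v : Matrix (Fin n) (Fin n) (ZMod k) := (M' : Matrix (Fin n) (Fin n) (ZMod k)) with hM'v
  have h3 : ∀ a j, M'v a j = M2v a j + M2v a I * Rv j := by
    intro a j
    have hco : M'v = M2v * rowMat I Rv := by
      rw [hM'v, hM'def, Matrix.SpecialLinearGroup.coe_mul, hM2v]
    rw [hco, mul_rowMat]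
  -- cleanliness of M'
  have hclean : cleanRows (i + 1) M'v := by
    intro a ha j
    rcases lt_or_ge (a : ℕ) i with hai | hai
    · have haI : a ≠ I := by
        intro h; rw [hIdef] at h; have := congrArg Fin.val h; simp at this; omega
      have hrowa : ∀ x, Mv a x = if a = x then 1 else 0 := hM a hai
      have hrow1 : ∀ x, M1v a x = if a = x then 1 else 0 := by
        intro x
        rw [h1, hrowa, hrowa, if_neg haI, zero_mul]
        split <;> simp
      have hrow2 : ∀ x, M2v a x = if a = x then 1 else 0 := by
        intro x
        rw [h2, hrow1]
        have : ∑ y, M1v a y * s y = s a := by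
          have hy : ∀ y ∈ Finset.univ, M1v a y * s y = if a = y then s y else 0 := by
            intro y _
            rw [hrow1, ite_mul, one_mul, zero_mul]
          rw [Finset.sum_congr rfl hy]
          simp
        rw [this, hs0 a (by omega)]
        split <;> simp
      rw [h3, hrow2, hrow2, if_neg haI, zero_mul, add_zero]
    · have haI : a = I := by
        rw [hIdef]; exact Fin.ext (show (a : ℕ) = i by omega)
      have hRvj : ∀ x, Rv x = if x = I then 0 else -(M2v I x) := fun x => rfl
      rw [haI, h3, hpivot, one_mul, hRvj]
      by_cases hj : j = I
      · rw [if_pos hj, add_zero, hj, hpivot, if_pos rfl]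
      · rw [if_neg hj, if_neg (fun h : I = j => hj h.symm)]
        ring
  -- inverse factors
  have hwI : (-w) P = 0 := by rw [Pi.neg_apply, hwP, neg_zero]
  have hsI' : (-s) I = 0 := by rw [Pi.neg_apply, hsI, neg_zero]
  have hRvI' : (-Rv) I = 0 := by rw [Pi.neg_apply, hRvI, neg_zero]
  set Em : Matrix.SpecialLinearGroup (Fin n) (ZMod k) :=
    ⟨colMat P (-w), det_colMat P (-w) hwI⟩ with hEmdef
  set Cm : Matrix.SpecialLinearGroup (Fin n) (ZMod k) :=
    ⟨colMat I (-s), det_colMat I (-s) hsI'⟩ with hCmdef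
  set Rm : Matrix.SpecialLinearGroup (Fin n) (ZMod k) :=
    ⟨rowMat I (-Rv), det_rowMat I (-Rv) hRvI'⟩ with hRmdef
  have hE : E * Em = 1 := by
    apply Subtype.ext
    rw [Matrix.SpecialLinearGroup.coe_mul, hEdef, hEmdef]
    show colMat P w * colMat P (-w) = _
    rw [colMat_mul_colMat P w (-w) hwI, add_neg_cancel, colMat_zero]
    rfl
  have hC : C * Cm = 1 := by
    apply Subtype.ext
    rw [Matrix.SpecialLinearGroup.coe_mul, hCdef, hCmdef]
    show colMat I s * colMat I (-s) = _
    rw [colMat_mul_colMat I s (-s) hsI', add_neg_cancel, colMat_zero]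
    rfl
  have hR : Rf * Rm = 1 := by
    apply Subtype.ext
    rw [Matrix.SpecialLinearGroup.coe_mul, hRfdef, hRmdef]
    show rowMat I Rv * rowMat I (-Rv) = _
    rw [rowMat_mul_rowMat I Rv (-Rv) hRvI, add_neg_cancel, rowMat_zero]
    rfl
  refine ⟨M', Rm, Cm, Em, hclean, ?_, ?_, ?_, ?_⟩
  · exact isRowMatrix_rowMat I (-Rv) hRvI'
  · exact isColumnMatrix_colMat I (-s) hsI'
  · have : (-w) = fun a => if a = I then -t else 0 := by
      funext a
      show -(w a) = _
      rw [hwdef]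
      show -(if a = I then t else 0) = (if a = I then -t else 0)
      by_cases h : a = I
      · rw [if_pos h, if_pos h]
      · rw [if_neg h, if_neg h, neg_zero]
    show IsElementaryMatrix (colMat P (-w))
    rw [this]
    exact isElementaryMatrix_colMat_single I P hIP (-t)
  · have e1 : M' * Rm = M2 := by rw [hM'def, mul_assoc, hR, mul_one]
    have e2 : M2 * Cm = M1 := by rw [hM2def, mul_assoc, hC, mul_one]
    have e3 : M1 * Em = M := by rw [hM1def, mul_assoc, hE, mul_one]
    rw [e1, e2, e3]
lemma isColumnMatrix_one {n k : ℕ} (hn : 1 ≤ n) :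
    IsColumnMatrix (1 : Matrix (Fin n) (Fin n) (ZMod k)) := by
  refine ⟨fun i => Matrix.one_apply_eq i, ⟨⟨0, by omega⟩, fun i j _ hij => Matrix.one_apply_ne hij⟩⟩

lemma isElementaryMatrix_one {n k : ℕ} (hn : 2 ≤ n) :
    IsElementaryMatrix (1 : Matrix (Fin n) (Fin n) (ZMod k)) := by
  refine ⟨fun i => Matrix.one_apply_eq i, ⟨⟨0, by omega⟩, ⟨1, by omega⟩, ?_, fun i j hij _ => Matrix.one_apply_ne hij⟩⟩
  intro h
  have := congrArg Fin.val h
  simp at this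

lemma base_case {n k : ℕ} (hn : 1 ≤ n) (M : Matrix.SpecialLinearGroup (Fin n) (ZMod k))
    (hM : cleanRows (n - 1) (M : Matrix (Fin n) (Fin n) (ZMod k))) :
    IsRowMatrix (M : Matrix (Fin n) (Fin n) (ZMod k)) := by
  set Mv : Matrix (Fin n) (Fin n) (ZMod k) := (M : Matrix (Fin n) (Fin n) (ZMod k)) with hMv
  set L : Fin n := ⟨n - 1, by omega⟩ with hLdef
  have htri : Mv.BlockTriangular OrderDual.toDual := by
    intro a b hab
    have hab' : (a : ℕ) < (b : ℕ) := hab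
    have ha : (a : ℕ) < n - 1 := by
      have := b.isLt; omega
    rw [hM a ha b, if_neg (fun h => by subst h; omega)]
  have hdet : Mv.det = 1 := M.prop
  rw [Matrix.det_of_lowerTriangular Mv htri] at hdet
  have hprod : ∏ a, Mv a a = Mv L L := by
    apply Finset.prod_eq_single L
    · intro a _ haL
      have ha : (a : ℕ) < n - 1 := by
        have := a.isLt
        rcases Nat.lt_or_ge (a : ℕ) (n - 1) with h | h
        · exact h
        · exact absurd (Fin.ext (show (a : ℕ) = n - 1 by omega) : a = L) haL
      rw [hM a ha a, if_pos rfl]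
    · intro h; exact absurd (Finset.mem_univ L) h
  rw [hprod] at hdet
  constructor
  · intro a
    by_cases h : a = L
    · rw [h]; exact hdet
    · have ha : (a : ℕ) < n - 1 := by
        have := a.isLt
        rcases Nat.lt_or_ge (a : ℕ) (n - 1) with hh | hh
        · exact hh
        · exact absurd (Fin.ext (show (a : ℕ) = n - 1 by omega) : a = L) h
      rw [hM a ha a, if_pos rfl]
  · refine ⟨L, fun a j haL haj => ?_⟩
    have ha : (a : ℕ) < n - 1 := by
      have := a.isLt
      rcases Nat.lt_or_ge (a : ℕ) (n - 1) with hh | hh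
      · exact hh
      · exact absurd (Fin.ext (show (a : ℕ) = n - 1 by omega) : a = L) haL
    rw [hM a ha j, if_neg haj]

lemma build_list {n k : ℕ} [NeZero k] (hn : 1 ≤ n) (d : ℕ) :
    ∀ i : ℕ, i + d = n - 1 →
    ∀ M : Matrix.SpecialLinearGroup (Fin n) (ZMod k),
      cleanRows i (M : Matrix (Fin n) (Fin n) (ZMod k)) →
    ∃ l : List (Matrix.SpecialLinearGroup (Fin n) (ZMod k) × Fin 3),
      l.length = 3 * d ∧
      (l.map Prod.snd).count 0 = d ∧
      (l.map Prod.snd).count 1 = d ∧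
      (l.map Prod.snd).count 2 = d ∧
      (∀ p ∈ l,
        (p.2 = 0 → IsRowMatrix (p.1 : Matrix (Fin n) (Fin n) (ZMod k))) ∧
        (p.2 = 1 → IsColumnMatrix (p.1 : Matrix (Fin n) (Fin n) (ZMod k))) ∧
        (p.2 = 2 → IsElementaryMatrix (p.1 : Matrix (Fin n) (Fin n) (ZMod k)))) ∧
      ∃ N : Matrix.SpecialLinearGroup (Fin n) (ZMod k),
        IsRowMatrix (N : Matrix (Fin n) (Fin n) (ZMod k)) ∧
        M = N * (l.map Prod.fst).prod := by
  induction d with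
  | zero =>
      intro i hid M hM
      have hieq : i = n - 1 := by omega
      subst hieq
      exact ⟨[], by simp, by simp, by simp, by simp, by simp, M, base_case hn M hM, by simp⟩
  | succ d ih =>
      intro i hid M hM
      have hi1 : i + 1 < n := by omega
      obtain ⟨M', Rm, Cm, Em, hclean, hrow, hcol, helem, heq⟩ := step_lemma i hi1 M hM
      obtain ⟨l, hlen, h0, h1c, h2c, htypes, N, hN, hNeq⟩ := ih (i + 1) (by omega) M' hclean
      refine ⟨l ++ [(Rm, 0), (Cm, 1), (Em, 2)], ?_, ?_, ?_, ?_, ?_, N, hN, ?_⟩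
      · simp [hlen]
        omega
      · rw [List.map_append, List.count_append, h0,
          show List.map Prod.snd [(Rm, (0 : Fin 3)), (Cm, 1), (Em, 2)] = [0, 1, 2] from rfl,
          show List.count (0 : Fin 3) [0, 1, 2] = 1 from by decide]
      · rw [List.map_append, List.count_append, h1c,
          show List.map Prod.snd [(Rm, (0 : Fin 3)), (Cm, 1), (Em, 2)] = [0, 1, 2] from rfl,
          show List.count (1 : Fin 3) [0, 1, 2] = 1 from by decide]
      · rw [List.map_append, List.count_append, h2c,
          show List.map Prod.snd [(Rm, (0 : Fin 3)), (Cm, 1), (Em, 2)] = [0, 1, 2] from rfl,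
          show List.count (2 : Fin 3) [0, 1, 2] = 1 from by decide]
      · intro p hp
        rcases List.mem_append.mp hp with h | h
        · exact htypes p h
        · simp only [List.mem_cons, List.mem_singleton, List.not_mem_nil, or_false] at h
          rcases h with rfl | rfl | rfl
          · exact ⟨fun _ => hrow, fun h => by simp at h, fun h => by simp at h⟩
          · exact ⟨fun h => by simp at h, fun _ => hcol, fun h => by simp at h⟩
          · exact ⟨fun h => by simp at h, fun h => by simp at h, fun _ => helem⟩
      · rw [List.map_append, List.prod_append, heq, hNeq]
        simp [mul_assoc]
/-- Every M ∈ SL_n(ℤ/kℤ) is a product of 3n matrices, of which n are row matrices,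
n are column matrices and n are elementary matrices.  (Each factor is tagged by an
element of Fin 3 recording its type: 0 = row, 1 = column, 2 = elementary.) -/
theorem SL_eq_prod_row_col_elementary (n k : ℕ) (hn : 3 ≤ n) (hk : 2 ≤ k)
    (M : Matrix.SpecialLinearGroup (Fin n) (ZMod k)) :
    ∃ l : List (Matrix.SpecialLinearGroup (Fin n) (ZMod k) × Fin 3),
      l.length = 3 * n ∧
      (l.map Prod.snd).count 0 = n ∧
      (l.map Prod.snd).count 1 = n ∧
      (l.map Prod.snd).count 2 = n ∧
      (∀ p ∈ l,
        (p.2 = 0 → IsRowMatrix (p.1 : Matrix (Fin n) (Fin n) (ZMod k))) ∧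
        (p.2 = 1 → IsColumnMatrix (p.1 : Matrix (Fin n) (Fin n) (ZMod k))) ∧
        (p.2 = 2 → IsElementaryMatrix (p.1 : Matrix (Fin n) (Fin n) (ZMod k)))) ∧
      (l.map Prod.fst).prod = M := by
  haveI : NeZero k := ⟨by omega⟩
  obtain ⟨l, hlen, h0, h1c, h2c, htypes, N, hN, hNeq⟩ :=
    build_list (k := k) (by omega : 1 ≤ n) (n - 1) 0 (by omega) M
      (fun a ha j => absurd ha (by omega))
  refine ⟨(N, 0) :: (l ++ [(1, 1), (1, 2)]), ?_, ?_, ?_, ?_, ?_, ?_⟩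
  · simp [hlen]
    omega
  · rw [List.map_cons, List.count_cons, List.map_append, List.count_append, h0,
      show List.map Prod.snd [((1 : Matrix.SpecialLinearGroup (Fin n) (ZMod k)), (1 : Fin 3)),
        (1, 2)] = [1, 2] from rfl,
      show List.count (0 : Fin 3) [1, 2] = 0 from by decide]
    simp
    omega
  · rw [List.map_cons, List.count_cons, List.map_append, List.count_append, h1c,
      show List.map Prod.snd [((1 : Matrix.SpecialLinearGroup (Fin n) (ZMod k)), (1 : Fin 3)),
        (1, 2)] = [1, 2] from rfl,
      show List.count (1 : Fin 3) [1, 2] = 1 from by decide]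
    simp
    omega
  · rw [List.map_cons, List.count_cons, List.map_append, List.count_append, h2c,
      show List.map Prod.snd [((1 : Matrix.SpecialLinearGroup (Fin n) (ZMod k)), (1 : Fin 3)),
        (1, 2)] = [1, 2] from rfl,
      show List.count (2 : Fin 3) [1, 2] = 1 from by decide]
    simp
    omega
  · intro p hp
    rcases List.mem_cons.mp hp with rfl | hp'
    · exact ⟨fun _ => hN, fun h => by simp at h, fun h => by simp at h⟩
    · rcases List.mem_append.mp hp' with h | h
      · exact htypes p h
      · simp only [List.mem_cons, List.mem_singleton, List.not_mem_nil, or_false] at h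
        rcases h with rfl | rfl
        · refine ⟨fun h => by simp at h, fun _ => ?_, fun h => by simp at h⟩
          rw [Matrix.SpecialLinearGroup.coe_one]
          exact isColumnMatrix_one (by omega)
        · refine ⟨fun h => by simp at h, fun h => by simp at h, fun _ => ?_⟩
          rw [Matrix.SpecialLinearGroup.coe_one]
          exact isElementaryMatrix_one (by omega)
  · rw [List.map_cons, List.prod_cons, List.map_append, List.prod_append, hNeq]
    simp [mul_assoc]
end
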